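/- arXiv:0811.2835 — 2 statements merged into one kernel-verified Lean document; each statement's English description precedes it below -/
import Mathlib

section
/- Let A be a positive finite-rank operator on a complex Hilbert space H. Then A is a finite sum of (rank-one) projections if and only if Tr(A) is a nonnegative integer and Tr(A) ≥ rank(A) (the trace of the range projection of A). -/
open scoped InnerProductSpace

variable {H : Type*} [NormedAddCommGroup H] [InnerProductSpace ℂ H] [CompleteSpace H]

/-- The rank-one operator `x ⊗ x : y ↦ ⟨x, y⟩ • x` associated to a vector `x`. -/
noncomputable def rankOne (x : H) : H →L[ℂ] H := (innerSL ℂ x).smulRight x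

/-- A rank-one (orthogonal) projection: the projection onto the span of a unit vector. -/
def IsRankOneProjection (P : H →L[ℂ] H) : Prop := ∃ x : H, ‖x‖ = 1 ∧ P = rankOne x

/-!
Diagonalise `A = ∑ μₗ • eₗ ⊗ eₗ` with `(eₗ)` orthonormal and `μₗ ≥ 0`, so that `Tr A = ∑ μₗ` and
`rank A ≤ #{l | μₗ ≠ 0}`. If `Tr A = k + 1 ≥ rank A`, a rank-one projection `x ⊗ x` can be split
off, leaving a positive operator of trace `k` and rank at most `k`: either some `μᵢ ≥ 1` can be
lowered by one (`x = eᵢ`) without the rank exceeding `k`, or `rank A = k + 1` and there are weights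
`μᵢ > 1 > μⱼ > 0`; then `μᵢ eᵢ ⊗ eᵢ + μⱼ eⱼ ⊗ eⱼ = x ⊗ x + (μᵢ + μⱼ - 1) u ⊗ u` for unit vectors
`x, u ∈ span {eᵢ, eⱼ}`, and the rank drops. Induction on `k` gives one direction; conversely a sum
of `n` rank-one projections has trace `n` and rank at most `n`.
-/

open Finset Module Function

lemma Fintype.sum_sub_sum_eq_of_eq_of_notMem {ι M : Type*} [Fintype ι] [AddCommGroup M]
    {f g : ι → M} (s : Finset ι) (h : ∀ l ∉ s, f l = g l) :
    ∑ l, f l - ∑ l, g l = ∑ l ∈ s, (f l - g l) := by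
  rw [← Finset.sum_sub_distrib]
  exact (Finset.sum_subset (Finset.subset_univ s) fun l _ hl => sub_eq_zero.2 (h l hl)).symm

section Weights

variable {ι : Type*} [Fintype ι]

/-- Spectral form of `Tr A = k ≥ rank A` for `A = ∑ μₗ • eₗ ⊗ eₗ`. -/
def IsAdmissibleWeights (k : ℕ) (μ : ι → ℝ) : Prop :=
  (∀ l, 0 ≤ μ l) ∧ ∑ l, μ l = k ∧ #{l | μ l ≠ 0} ≤ k

lemma card_filter_ne_zero_le {μ μ' : ι → ℝ} (h : ∀ l, μ' l ≠ 0 → μ l ≠ 0) :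
    #{l | μ' l ≠ 0} ≤ #{l | μ l ≠ 0} :=
  card_le_card fun l => by simpa using h l

lemma card_filter_ne_zero_lt {μ μ' : ι → ℝ} {j : ι} (hj : μ j ≠ 0) (hj' : μ' j = 0)
    (h : ∀ l, μ' l ≠ 0 → μ l ≠ 0) : #{l | μ' l ≠ 0} < #{l | μ l ≠ 0} :=
  card_lt_card <| (ssubset_iff_of_subset fun l => by simpa using h l).2 ⟨j, by simpa, by simpa⟩

lemma IsAdmissibleWeights.exists_one_le_or_exists_lt_one_lt {μ : ι → ℝ} {k : ℕ}
    (h : IsAdmissibleWeights (k + 1) μ) :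
    (∃ i, 1 ≤ μ i ∧ (μ i = 1 ∨ #{l | μ l ≠ 0} ≤ k)) ∨
      ∃ i j, i ≠ j ∧ 1 < μ i ∧ 0 < μ j ∧ μ j < 1 := by
  obtain ⟨hμ, hsum, hcard⟩ := h
  set S : Finset ι := {l | μ l ≠ 0}
  have hsumS : ∑ l ∈ S, μ l = k + 1 := by rw [sum_filter_ne_zero, hsum, Nat.cast_succ]
  have hcardS : (#S : ℝ) ≤ k + 1 := by exact_mod_cast hcard
  have hmemS : ∀ {l}, l ∈ S ↔ 0 < μ l := by simp [S, (hμ _).lt_iff_ne']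
  by_contra! h
  obtain ⟨hsub, hrot⟩ := h
  obtain ⟨i, hi⟩ : ∃ i, 1 < μ i := by
    by_contra! hle
    have hS : S.Nonempty := nonempty_of_sum_ne_zero (by rw [hsumS]; positivity)
    have hlt := sum_lt_sum_of_nonempty hS fun l _ =>
      (hle l).lt_of_ne fun h1 => (hsub l h1.ge).1 h1
    rw [hsumS, sum_const, nsmul_one] at hlt
    linarith
  have hk : #S = k + 1 := le_antisymm hcard (hsub i hi.le).2
  have hlt : ∑ l ∈ S, (1 : ℝ) < ∑ l ∈ S, μ l :=
    sum_lt_sum (fun l hl => (eq_or_ne l i).elim (fun h => h ▸ hi.le)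
      fun h => hrot i l (Ne.symm h) hi (hmemS.1 hl)) ⟨i, hmemS.2 (by linarith), hi⟩
  rw [hsumS, sum_const, nsmul_one, hk] at hlt
  push_cast at hlt
  exact lt_irrefl _ hlt

lemma IsAdmissibleWeights.update_sub_one [DecidableEq ι] {μ : ι → ℝ} {k : ℕ}
    (h : IsAdmissibleWeights (k + 1) μ) {i : ι} (hi : 1 ≤ μ i)
    (hcase : μ i = 1 ∨ #{l | μ l ≠ 0} ≤ k) : IsAdmissibleWeights k (update μ i (μ i - 1)) := by
  obtain ⟨hμ, hsum, hcard⟩ := h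
  have hsupp : ∀ l, update μ i (μ i - 1) l ≠ 0 → μ l ≠ 0 := fun l hl => by
    rcases eq_or_ne l i with rfl | hne
    · linarith
    · rwa [update_of_ne hne] at hl
  refine ⟨(forall_update_iff _ fun _ y => 0 ≤ y).2 ⟨by linarith, fun l _ => hμ l⟩, ?_, ?_⟩
  · have := Fintype.sum_sub_sum_eq_of_eq_of_notMem {i} (f := μ) (g := update μ i (μ i - 1))
      fun l hl => by rw [update_of_ne (by simpa using hl)]
    rw [sum_singleton, update_self, hsum] at this
    push_cast at this
    linarith
  · rcases hcase with h1 | hk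
    · have := card_filter_ne_zero_lt (j := i) (by linarith) (by simp [h1]) hsupp
      omega
    · exact (card_filter_ne_zero_le hsupp).trans hk

lemma IsAdmissibleWeights.update_update [DecidableEq ι] {μ : ι → ℝ} {k : ℕ}
    (h : IsAdmissibleWeights (k + 1) μ) {i j : ι} (hij : i ≠ j) (hi : 1 < μ i) (hj : 0 < μ j) :
    IsAdmissibleWeights k (update (update μ j 0) i (μ i + μ j - 1)) := by
  obtain ⟨hμ, hsum, hcard⟩ := h
  refine ⟨(forall_update_iff _ fun _ y => 0 ≤ y).2 ⟨by linarith,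
    fun l _ => (forall_update_iff _ fun _ y => 0 ≤ y).2 ⟨le_rfl, fun l _ => hμ l⟩ l⟩, ?_, ?_⟩
  · have := Fintype.sum_sub_sum_eq_of_eq_of_notMem {i, j}
      (f := μ) (g := update (update μ j 0) i (μ i + μ j - 1)) fun l hl => by
        simp only [mem_insert, mem_singleton, not_or] at hl
        rw [update_of_ne hl.1, update_of_ne hl.2]
    rw [sum_pair hij, update_self, update_of_ne hij.symm, update_self, hsum] at this
    push_cast at this
    linarith
  · have := card_filter_ne_zero_lt hj.ne' (by rw [update_of_ne hij.symm, update_self])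
      fun l (hl : update (update μ j 0) i (μ i + μ j - 1) l ≠ 0) => by
        rcases eq_or_ne l i with rfl | hli
        · linarith
        · rcases eq_or_ne l j with rfl | hlj
          · simp [update_of_ne hli] at hl
          · rwa [update_of_ne hli, update_of_ne hlj] at hl
    omega

end Weights

/-- The value of `c ^ 2` is forced: `diag (a, b) - (c, s) ⊗ (c, s)` is singular exactly when
`c ^ 2 / a + s ^ 2 / b = 1`. -/
lemma exists_rotation_coeffs {a b : ℝ} (ha : 1 < a) (hb₀ : 0 < b) (hb₁ : b < 1) :
    ∃ c s α β : ℝ, c ^ 2 + s ^ 2 = 1 ∧ α ^ 2 + β ^ 2 = 1 ∧ c ^ 2 + (a + b - 1) * α ^ 2 = a ∧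
      s ^ 2 + (a + b - 1) * β ^ 2 = b ∧ c * s + (a + b - 1) * (α * β) = 0 := by
  have hD : 0 < a - b := by linarith
  have ht : 0 < a + b - 1 := by linarith
  have ha₁ : a - 1 ≠ 0 := by linarith
  obtain ⟨c, hc⟩ : ∃ c : ℝ, c ^ 2 = a * (1 - b) / (a - b) :=
    ⟨_, Real.sq_sqrt (div_nonneg (by nlinarith) hD.le)⟩
  obtain ⟨s, hs⟩ : ∃ s : ℝ, s ^ 2 = b * (a - 1) / (a - b) :=
    ⟨_, Real.sq_sqrt (div_nonneg (by nlinarith) hD.le)⟩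
  obtain ⟨α, hα⟩ : ∃ α : ℝ, α ^ 2 = a * (a - 1) / ((a - b) * (a + b - 1)) :=
    ⟨_, Real.sq_sqrt (div_nonneg (by nlinarith) (by positivity))⟩
  have hα₀ : α ≠ 0 := by
    rintro rfl
    exact (div_pos (by nlinarith) (by positivity)).ne' (hα.symm.trans (zero_pow two_ne_zero))
  refine ⟨c, s, α, -(c * s) / ((a + b - 1) * α), ?_, ?_, ?_, ?_, ?_⟩
  · rw [hc, hs]; field_simp; ring
  · rw [div_pow, neg_sq, mul_pow, mul_pow, hc, hs, hα]; field_simp; ring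
  · rw [hc, hα]; field_simp; ring
  · rw [div_pow, neg_sq, mul_pow, mul_pow, hs, hc, hα]; field_simp; ring
  · field_simp; ring

section Operators

variable {E : Type*} [NormedAddCommGroup E] [InnerProductSpace ℂ E]

lemma rankOne_apply (x y : E) : rankOne x y = ⟪x, y⟫_ℂ • x := rfl

lemma norm_smul_add_smul_eq_one {v w : E} (hv : ‖v‖ = 1) (hw : ‖w‖ = 1) (hvw : ⟪v, w⟫_ℂ = 0)
    {c s : ℝ} (hcs : c ^ 2 + s ^ 2 = 1) : ‖(c : ℂ) • v + (s : ℂ) • w‖ = 1 := by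
  have h := norm_add_sq_eq_norm_sq_add_norm_sq_of_inner_eq_zero ((c : ℂ) • v) ((s : ℂ) • w)
    (by rw [inner_smul_left, inner_smul_right, hvw, mul_zero, mul_zero])
  rw [norm_smul, norm_smul, hv, hw, Complex.norm_real, Complex.norm_real, Real.norm_eq_abs,
    Real.norm_eq_abs, mul_one, mul_one, abs_mul_abs_self, abs_mul_abs_self, ← sq, ← sq, ← sq,
    hcs] at h
  exact (pow_eq_one_iff_of_nonneg (norm_nonneg _) two_ne_zero).1 h

lemma smul_rankOne_add_smul_rankOne {a b c s α β t : ℝ} (ha : c ^ 2 + t * α ^ 2 = a)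
    (hb : s ^ 2 + t * β ^ 2 = b) (hab : c * s + t * (α * β) = 0) (v w : E) :
    (a : ℂ) • rankOne v + (b : ℂ) • rankOne w =
      rankOne ((c : ℂ) • v + (s : ℂ) • w) + (t : ℂ) • rankOne ((α : ℂ) • v + (β : ℂ) • w) := by
  have ha' : (c : ℂ) ^ 2 + t * α ^ 2 = a := by exact_mod_cast ha
  have hb' : (s : ℂ) ^ 2 + t * β ^ 2 = b := by exact_mod_cast hb
  have hab' : (c : ℂ) * s + t * (α * β) = 0 := by exact_mod_cast hab
  ext y
  simp only [add_apply, smul_apply, rankOne_apply,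
    inner_add_left, inner_smul_left, Complex.conj_ofReal]
  match_scalars
  · linear_combination (-⟪v, y⟫_ℂ) * ha' - ⟪w, y⟫_ℂ * hab'
  · linear_combination (-⟪w, y⟫_ℂ) * hb' - ⟪v, y⟫_ℂ * hab'

def IsSumOfRankOneProjections (A : E →L[ℂ] E) (n : ℕ) : Prop :=
  ∃ P : Fin n → (E →L[ℂ] E), (∀ i, IsRankOneProjection (P i)) ∧ A = ∑ i, P i

lemma isSumOfRankOneProjections_zero : IsSumOfRankOneProjections (0 : E →L[ℂ] E) 0 :=
  ⟨Fin.elim0, fun i => i.elim0, by simp⟩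

lemma IsSumOfRankOneProjections.rankOne_add {A : E →L[ℂ] E} {n : ℕ}
    (h : IsSumOfRankOneProjections A n) {x : E} (hx : ‖x‖ = 1) :
    IsSumOfRankOneProjections (rankOne x + A) (n + 1) := by
  obtain ⟨P, hP, rfl⟩ := h
  exact ⟨Fin.cons (rankOne x) P, Fin.cases ⟨x, hx, rfl⟩ hP, by rw [Fin.sum_cons]⟩

variable {ι : Type*} [Fintype ι]

noncomputable def rankOneSum (μ : ι → ℝ) (e : ι → E) : E →L[ℂ] E :=
  ∑ l, (μ l : ℂ) • rankOne (e l)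

lemma rankOneSum_apply (μ : ι → ℝ) (e : ι → E) (y : E) :
    rankOneSum μ e y = ∑ l, ((μ l : ℂ) * ⟪e l, y⟫_ℂ) • e l := by
  simp [rankOneSum, rankOne_apply, mul_smul]

lemma rankOneSum_one (e : ι → E) : rankOneSum 1 e = ∑ l, rankOne (e l) := by
  simp [rankOneSum]

lemma isPositive_rankOneSum {μ : ι → ℝ} (hμ : ∀ l, 0 ≤ μ l) (e : ι → E) :
    (rankOneSum μ e).IsPositive :=
  ContinuousLinearMap.isPositive_sum _ fun l _ =>
    (InnerProductSpace.isPositive_rankOne_self (e l)).smul_of_nonneg (by exact_mod_cast hμ l)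

lemma range_rankOneSum_le [DecidableEq E] (μ : ι → ℝ) (e : ι → E) :
    LinearMap.range (rankOneSum μ e : E →ₗ[ℂ] E) ≤
      Submodule.span ℂ (({l | μ l ≠ 0} : Finset ι).image e : Set E) := by
  rintro _ ⟨y, rfl⟩
  rw [ContinuousLinearMap.coe_coe, rankOneSum_apply]
  refine Submodule.sum_mem _ fun l _ => ?_
  by_cases hl : μ l = 0
  · simp [hl]
  · exact Submodule.smul_mem _ _ <| Submodule.subset_span <|
      Finset.mem_coe.2 <| Finset.mem_image_of_mem e (by simpa using hl)

lemma finrank_range_rankOneSum_le (μ : ι → ℝ) (e : ι → E) :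
    finrank ℂ (LinearMap.range (rankOneSum μ e : E →ₗ[ℂ] E)) ≤ #{l | μ l ≠ 0} := by
  classical
  calc finrank ℂ (LinearMap.range (rankOneSum μ e : E →ₗ[ℂ] E))
      ≤ finrank ℂ (Submodule.span ℂ (({l | μ l ≠ 0} : Finset ι).image e : Set E)) :=
        Submodule.finrank_mono (range_rankOneSum_le μ e)
    _ ≤ #(({l | μ l ≠ 0} : Finset ι).image e) := finrank_span_finset_le_card _
    _ ≤ #{l | μ l ≠ 0} := card_image_le

instance finiteDimensional_range_rankOneSum (μ : ι → ℝ) (e : ι → E) :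
    FiniteDimensional ℂ (LinearMap.range (rankOneSum μ e : E →ₗ[ℂ] E)) := by
  classical
  exact Submodule.finiteDimensional_of_le (range_rankOneSum_le μ e)

lemma hasSum_inner_rankOneSum {κ : Type*} (b : HilbertBasis κ ℂ E) (μ : ι → ℝ) (e : ι → E) :
    HasSum (fun j => ⟪b j, rankOneSum μ e (b j)⟫_ℂ) (∑ l, (μ l : ℂ) * ⟪e l, e l⟫_ℂ) := by
  simp only [rankOneSum_apply, inner_sum, inner_smul_right]
  refine hasSum_sum fun l _ => ?_
  simpa only [mul_assoc] using (b.hasSum_inner_mul_inner (e l) (e l)).mul_left (μ l : ℂ)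

lemma tsum_re_inner_rankOneSum {κ : Type*} (b : HilbertBasis κ ℂ E) (μ : ι → ℝ) {e : ι → E}
    (he : ∀ l, ‖e l‖ = 1) : ∑' j, (⟪b j, rankOneSum μ e (b j)⟫_ℂ).re = ∑ l, μ l := by
  have := (RCLike.hasSum_re ℂ (hasSum_inner_rankOneSum b μ e)).tsum_eq
  simpa [inner_self_eq_norm_sq_to_K, he] using this

theorem ContinuousLinearMap.IsPositive.exists_orthonormal_rankOneSum_eq {A : E →L[ℂ] E}
    (hA : A.IsPositive) [FiniteDimensional ℂ (LinearMap.range (A : E →ₗ[ℂ] E))] :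
    ∃ (e : Fin (finrank ℂ (LinearMap.range (A : E →ₗ[ℂ] E))) → E) (μ : _ → ℝ),
      Orthonormal ℂ e ∧ (∀ l, 0 ≤ μ l) ∧ A = rankOneSum μ e := by
  set V := LinearMap.range (A : E →ₗ[ℂ] E)
  have hT := hA.isSymmetric.restrict_invariant
    (V := V) fun v _ => LinearMap.mem_range_self _ v
  set eb := hT.eigenvectorBasis rfl
  set μ := hT.eigenvalues rfl
  have hAe : ∀ l, A (eb l) = (μ l : ℂ) • (eb l : E) :=
    fun l => congrArg Subtype.val (hT.apply_eigenvectorBasis rfl l)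
  have he : ∀ l, ‖(eb l : E)‖ = 1 := fun l => eb.orthonormal.1 l
  refine ⟨fun l => eb l, μ, eb.orthonormal.comp_linearIsometry V.subtypeₗᵢ, fun l => ?_, ?_⟩
  · have := hA.re_inner_nonneg_right (eb l : E)
    rw [hAe, inner_smul_right, inner_self_eq_norm_sq_to_K, he] at this
    simpa using this
  · ext y
    have hy := congrArg Subtype.val (eb.sum_repr' ⟨A y, LinearMap.mem_range_self _ y⟩)
    simp only [Submodule.coe_sum, Submodule.coe_smul, Submodule.coe_inner] at hy
    rw [rankOneSum_apply, ← hy]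
    refine Finset.sum_congr rfl fun l _ => ?_
    have hsymm := hA.isSymmetric (eb l) y
    simp only [ContinuousLinearMap.coe_coe] at hsymm
    rw [← hsymm, hAe, inner_smul_left, Complex.conj_ofReal]

lemma rankOneSum_eq_rankOne_add_update [DecidableEq ι] (μ : ι → ℝ) (e : ι → E) (i : ι) :
    rankOneSum μ e = rankOne (e i) + rankOneSum (update μ i (μ i - 1)) e := by
  rw [← sub_eq_iff_eq_add, rankOneSum, rankOneSum,
    Fintype.sum_sub_sum_eq_of_eq_of_notMem {i} fun l hl => by
      rw [update_of_ne (by simpa using hl)],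
    sum_singleton, update_self]
  push_cast
  rw [← sub_smul, sub_sub_cancel, one_smul]

lemma rankOneSum_eq_rankOne_add_update_update [DecidableEq ι] {μ : ι → ℝ} (e : ι → E) {i j : ι}
    (hij : i ≠ j) {c s α β t : ℝ} (hi : c ^ 2 + t * α ^ 2 = μ i) (hj : s ^ 2 + t * β ^ 2 = μ j)
    (hcross : c * s + t * (α * β) = 0) :
    rankOneSum μ e = rankOne ((c : ℂ) • e i + (s : ℂ) • e j) +
      rankOneSum (update (update μ j 0) i t) (update e i ((α : ℂ) • e i + (β : ℂ) • e j)) := by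
  have h := smul_rankOne_add_smul_rankOne hi hj hcross (e i) (e j)
  rw [← sub_eq_iff_eq_add, rankOneSum, rankOneSum,
    Fintype.sum_sub_sum_eq_of_eq_of_notMem {i, j} fun l hl => by
      simp only [mem_insert, mem_singleton, not_or] at hl
      rw [update_of_ne hl.1, update_of_ne hl.1, update_of_ne hl.2],
    sum_pair hij, update_self, update_self, update_of_ne hij.symm, update_self,
    update_of_ne hij.symm, Complex.ofReal_zero, zero_smul, sub_zero, eq_sub_of_add_eq h.symm]
  abel

lemma Orthonormal.exists_rankOne_add_rankOneSum [DecidableEq ι] {e : ι → E}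
    (he : Orthonormal ℂ e) {μ : ι → ℝ} {k : ℕ} (hμ : IsAdmissibleWeights (k + 1) μ) :
    ∃ (x : E) (e' : ι → E) (μ' : ι → ℝ), ‖x‖ = 1 ∧ (∀ l, ‖e' l‖ = 1) ∧
      IsAdmissibleWeights k μ' ∧ rankOneSum μ e = rankOne x + rankOneSum μ' e' := by
  rcases hμ.exists_one_le_or_exists_lt_one_lt with ⟨i, hi, hcase⟩ | ⟨i, j, hij, hi, hj₀, hj₁⟩
  · exact ⟨e i, e, _, he.1 i, he.1, hμ.update_sub_one hi hcase,
      rankOneSum_eq_rankOne_add_update μ e i⟩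
  · obtain ⟨c, s, α, β, hcs, hαβ, hci, hsj, hcross⟩ := exists_rotation_coeffs hi hj₀ hj₁
    have hv : ∀ {c s : ℝ}, c ^ 2 + s ^ 2 = 1 → ‖(c : ℂ) • e i + (s : ℂ) • e j‖ = 1 :=
      norm_smul_add_smul_eq_one (he.1 i) (he.1 j) (he.2 hij)
    exact ⟨_, _, _, hv hcs, (forall_update_iff _ fun _ y => ‖y‖ = 1).2 ⟨hv hαβ, fun l _ => he.1 l⟩,
      hμ.update_update hij hi hj₀, rankOneSum_eq_rankOne_add_update_update e hij hci hsj hcross⟩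

lemma IsSumOfRankOneProjections.trace_eq_and_finrank_le {A : E →L[ℂ] E} {n : ℕ}
    (h : IsSumOfRankOneProjections A n) {κ : Type*} (b : HilbertBasis κ ℂ E) :
    ∑' j, (⟪b j, A (b j)⟫_ℂ).re = n ∧ finrank ℂ (LinearMap.range (A : E →ₗ[ℂ] E)) ≤ n := by
  obtain ⟨P, hP, rfl⟩ := h
  choose x hx hPx using hP
  rw [sum_congr rfl fun i _ => hPx i, ← rankOneSum_one]
  refine ⟨by simp [tsum_re_inner_rankOneSum b 1 hx],
    (finrank_range_rankOneSum_le 1 x).trans ((card_le_univ _).trans (by simp))⟩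

theorem ContinuousLinearMap.IsPositive.isSumOfRankOneProjections {A : E →L[ℂ] E}
    (hA : A.IsPositive) [FiniteDimensional ℂ (LinearMap.range (A : E →ₗ[ℂ] E))]
    {κ : Type*} (b : HilbertBasis κ ℂ E) {k : ℕ} (htr : ∑' j, (⟪b j, A (b j)⟫_ℂ).re = k)
    (hrank : finrank ℂ (LinearMap.range (A : E →ₗ[ℂ] E)) ≤ k) :
    IsSumOfRankOneProjections A k := by
  induction k generalizing A with
  | zero =>
    have hA0 : A = 0 := ContinuousLinearMap.coe_injective <| LinearMap.range_eq_bot.1 <|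
      Submodule.finrank_eq_zero.1 (Nat.le_zero.1 hrank)
    exact hA0 ▸ isSumOfRankOneProjections_zero
  | succ k ih =>
    obtain ⟨e, μ, he, hμ, hAeq⟩ := hA.exists_orthonormal_rankOneSum_eq
    have hadm : IsAdmissibleWeights (k + 1) μ :=
      ⟨hμ, by rw [← tsum_re_inner_rankOneSum b μ he.1, ← hAeq, htr],
        (card_le_univ _).trans (by simpa using hrank)⟩
    obtain ⟨x, e', μ', hx, he', ⟨hμ', hsum', hcard'⟩, hsplit⟩ :=
      he.exists_rankOne_add_rankOneSum hadm
    rw [hAeq, hsplit]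
    exact (ih (isPositive_rankOneSum hμ' e') (by rw [tsum_re_inner_rankOneSum b μ' he', hsum'])
      ((finrank_range_rankOneSum_le μ' e').trans hcard')).rankOne_add hx

end Operators

/-- Fillmore's theorem (Corollary 2.5): a positive finite-rank operator `A` is a finite sum
of (rank-one) projections if and only if `Tr A` is a nonnegative integer with
`Tr A ≥ rank A`.  The trace is computed with respect to a Hilbert basis `b`. -/
theorem stmt_4 {ι : Type*} (b : HilbertBasis ι ℂ H) (A : H →L[ℂ] H)
    (hA : A.IsPositive) (hfr : FiniteDimensional ℂ (LinearMap.range (A : H →ₗ[ℂ] H))) :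
    (∃ (n : ℕ) (P : Fin n → (H →L[ℂ] H)),
        (∀ i, IsRankOneProjection (P i)) ∧ A = ∑ i, P i) ↔
      ∃ k : ℕ, (∑' i, (⟪b i, A (b i)⟫_ℂ).re) = (k : ℝ) ∧
        Module.finrank ℂ (LinearMap.range (A : H →ₗ[ℂ] H)) ≤ k := by
  constructor
  · rintro ⟨n, h⟩
    exact ⟨n, IsSumOfRankOneProjections.trace_eq_and_finrank_le h b⟩
  · rintro ⟨k, htr, hrank⟩
    exact ⟨k, hA.isSumOfRankOneProjections b htr hrank⟩
end

section
/- Let E and F be mutually orthogonal Murray–von Neumann equivalent projections in a C*-algebra A, let V ∈ A be a partial isometry with V*V = E and VV* = F, let 0 ≤ λ ≤ 1 and μ ≥ 0, and define ρ = (1-λ)μ/(μ+λ), ν = (1-λ)λ/((1+μ-λ)(μ+λ)) (with ρ = 0, ν = 1 when μ = 0). Then P₋ := (1-ρ)E - √(ρ(1-ρ))(V+V*) + ρF and P₊ := (1-ν)E + √(ν(1-ν))(V+V*) + νF are projections in A, each equivalent to E, and (1+μ)E + (1-λ)F = P₋ + (1+μ-λ)P₊. -/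
/-!
For `0 ≤ t ≤ 1` the element `W = √(1-t) E + √t V` satisfies `W*W = E`, since `V*V = E` and the
cross terms `EV`, `V*E` vanish by orthogonality. Hence `WW* = (1-t)E + √(t(1-t))(V+V*) + tF`
is a projection equivalent to `E`: this is `P₊` for `t = ν`, and `P₋` for `t = ρ` after
replacing `V` by `-V`. The decomposition of `(1+μ)E + (1-λ)F` then reduces to the scalar
identities `ρ + (1+μ-λ)ν = 1-λ` and `ρ(1-ρ) = (1+μ-λ)² ν(1-ν)`.
-/

variable {A : Type*} [NormedRing A] [StarRing A] [CStarRing A] [CompleteSpace A]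
  [NormedAlgebra ℂ A] [StarModule ℂ A]

/-- A projection (self-adjoint idempotent) in a C*-algebra. -/
def IsProjection (p : A) : Prop := star p = p ∧ p * p = p

/-- Murray–von Neumann equivalence of projections in a C*-algebra. -/
def MvNEquiv (p q : A) : Prop := ∃ w : A, star w * w = p ∧ w * star w = q

section PartialIsometry

variable {R : Type*} [NormedRing R] [StarRing R] {E F V : R}

/-- `(VE - V)*(VE - V) = EEE - EE - EE + E = 0`, so the C*-identity forces `VE = V`. -/
theorem mul_eq_self_of_star_mul_self_eq [CStarRing R] (hE : IsProjection E)
    (hV : star V * V = E) : V * E = V := by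
  obtain ⟨hEs, hEi⟩ := hE
  have hzero : star (V * E - V) * (V * E - V) = 0 := by
    calc star (V * E - V) * (V * E - V)
        = E * (star V * V) * E - E * (star V * V) - (star V * V) * E + star V * V := by
          simp only [star_sub, star_mul, hEs]
          noncomm_ring
      _ = 0 := by rw [hV, hEi, hEi, sub_self, zero_sub, neg_add_cancel]
  exact sub_eq_zero.mp ((CStarRing.star_mul_self_eq_zero_iff _).mp hzero)

theorem mul_eq_self_of_mul_star_self_eq [CStarRing R] (hF : IsProjection F)
    (hV : V * star V = F) : F * V = V := by
  have h := mul_eq_self_of_star_mul_self_eq hF (by rwa [star_star])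
  simpa only [star_mul, star_star, hF.1] using congrArg star h

theorem IsProjection.mul_star_self [CStarRing R] {W : R} (hW : IsProjection (star W * W)) :
    IsProjection (W * star W) := by
  refine ⟨by rw [star_mul, star_star], ?_⟩
  calc W * star W * (W * star W) = W * (star W * W) * star W := by noncomm_ring
    _ = W * star W := by rw [mul_eq_self_of_star_mul_self_eq hW rfl]

theorem isProjection_and_mvNEquiv_rotation [CStarRing R] [NormedAlgebra ℂ R] [StarModule ℂ R]
    (hE : IsProjection E) (hF : IsProjection F) (horth : E * F = 0)
    (hV1 : star V * V = E) (hV2 : V * star V = F) {t : ℝ} (ht0 : 0 ≤ t) (ht1 : t ≤ 1) :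
    let P := ((1 - t : ℝ) : ℂ) • E + ((Real.sqrt (t * (1 - t)) : ℝ) : ℂ) • (V + star V)
      + ((t : ℝ) : ℂ) • F
    IsProjection P ∧ MvNEquiv E P := by
  intro P
  have hVE : V * E = V := mul_eq_self_of_star_mul_self_eq hE hV1
  have hEV : E * V = 0 := by
    rw [← mul_eq_self_of_mul_star_self_eq hF hV2, ← mul_assoc, horth, zero_mul]
  have hEV' : E * star V = star V := by
    simpa only [star_mul, hE.1] using congrArg star hVE
  have hV'E : star V * E = 0 := by
    simpa only [star_mul, hE.1, star_zero] using congrArg star hEV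
  set a : ℝ := Real.sqrt (1 - t)
  set b : ℝ := Real.sqrt t
  have ha : a ^ 2 = 1 - t := Real.sq_sqrt (by linarith)
  have hb : b ^ 2 = t := Real.sq_sqrt ht0
  have hab : a * b = Real.sqrt (t * (1 - t)) := by
    rw [mul_comm t, Real.sqrt_mul (by linarith)]
  set W : R := (a : ℂ) • E + (b : ℂ) • V
  have hW' : star W = (a : ℂ) • E + (b : ℂ) • star V := by
    simp only [W, star_add, star_smul, hE.1, Complex.star_def, Complex.conj_ofReal]
  have hWW : star W * W = E := by
    rw [hW']
    simp only [W, add_mul, mul_add, smul_mul_assoc, mul_smul_comm, hE.2, hEV, hV'E, hV1,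
      smul_zero, zero_add]
    linear_combination (norm := module) (congrArg Complex.ofReal ha) • E
      + (congrArg Complex.ofReal hb) • E
  have hWP : W * star W = P := by
    rw [hW']
    simp only [W, P, add_mul, mul_add, smul_mul_assoc, mul_smul_comm, hE.2, hEV', hVE, hV2]
    linear_combination (norm := module) (congrArg Complex.ofReal ha) • E
      + (congrArg Complex.ofReal hab) • (V + star V) + (congrArg Complex.ofReal hb) • F
  exact ⟨hWP ▸ IsProjection.mul_star_self (hWW ▸ hE), W, hWW, hWP⟩

end PartialIsometry

section Coefficients

variable {μ lam ρ ν : ℝ}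

theorem rho_mem_Icc (hμ : 0 ≤ μ) (hlam0 : 0 ≤ lam) (hlam1 : lam ≤ 1)
    (hρ : ρ = if μ = 0 then 0 else (1 - lam) * μ / (μ + lam)) : 0 ≤ ρ ∧ ρ ≤ 1 := by
  rcases hμ.eq_or_lt with rfl | hpos
  · simp [hρ]
  have hD : 0 < μ + lam := by linarith
  rw [hρ, if_neg hpos.ne', div_le_one hD]
  exact ⟨div_nonneg (by nlinarith) hD.le, by nlinarith⟩

theorem nu_mem_Icc (hμ : 0 ≤ μ) (hlam0 : 0 ≤ lam) (hlam1 : lam ≤ 1)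
    (hν : ν = if μ = 0 then 1 else (1 - lam) * lam / ((1 + μ - lam) * (μ + lam))) :
    0 ≤ ν ∧ ν ≤ 1 := by
  rcases hμ.eq_or_lt with rfl | hpos
  · simp [hν]
  have hD : 0 < (1 + μ - lam) * (μ + lam) := mul_pos (by linarith) (by linarith)
  rw [hν, if_neg hpos.ne', div_le_one hD]
  exact ⟨div_nonneg (by nlinarith) hD.le, by nlinarith⟩

theorem rho_add_mul_nu (hμ : 0 ≤ μ) (hlam0 : 0 ≤ lam) (hlam1 : lam ≤ 1)
    (hρ : ρ = if μ = 0 then 0 else (1 - lam) * μ / (μ + lam))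
    (hν : ν = if μ = 0 then 1 else (1 - lam) * lam / ((1 + μ - lam) * (μ + lam))) :
    ρ + (1 + μ - lam) * ν = 1 - lam := by
  rcases hμ.eq_or_lt with rfl | hpos
  · simp [hρ, hν]
  have hD : μ + lam ≠ 0 := by linarith
  have hc : 1 + μ - lam ≠ 0 := by linarith
  rw [hρ, hν, if_neg hpos.ne', if_neg hpos.ne']
  field_simp

theorem mul_sqrt_nu_mul_one_sub (hμ : 0 ≤ μ) (hlam0 : 0 ≤ lam) (hlam1 : lam ≤ 1)
    (hρ : ρ = if μ = 0 then 0 else (1 - lam) * μ / (μ + lam))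
    (hν : ν = if μ = 0 then 1 else (1 - lam) * lam / ((1 + μ - lam) * (μ + lam))) :
    (1 + μ - lam) * Real.sqrt (ν * (1 - ν)) = Real.sqrt (ρ * (1 - ρ)) := by
  rcases hμ.eq_or_lt with rfl | hpos
  · simp [hρ, hν]
  have hD : μ + lam ≠ 0 := by linarith
  have hc : 0 < 1 + μ - lam := by linarith
  have key : ρ * (1 - ρ) = (1 + μ - lam) ^ 2 * (ν * (1 - ν)) := by
    rw [hρ, hν, if_neg hpos.ne', if_neg hpos.ne']
    field_simp
    ring
  rw [key, Real.sqrt_mul (sq_nonneg _), Real.sqrt_sq hc.le]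

end Coefficients

/-- Lemma 2.6 / Remark 2.7(i): for mutually orthogonal equivalent projections `E, F`
with `V* V = E`, `V V* = F`, and `ρ, ν` as prescribed, the elements
`P₋ = (1-ρ)E - √(ρ(1-ρ))(V+V*) + ρF` and `P₊ = (1-ν)E + √(ν(1-ν))(V+V*) + νF`
are projections, each equivalent to `E`, and `(1+μ)E + (1-λ)F = P₋ + (1+μ-λ)P₊`. -/
theorem stmt_7 (E F V : A) (hE : IsProjection E) (hF : IsProjection F)
    (horth : E * F = 0) (hV1 : star V * V = E) (hV2 : V * star V = F)
    (μ lam : ℝ) (hμ : 0 ≤ μ) (hlam0 : 0 ≤ lam) (hlam1 : lam ≤ 1)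
    (ρ ν : ℝ)
    (hρ : ρ = if μ = 0 then 0 else (1 - lam) * μ / (μ + lam))
    (hν : ν = if μ = 0 then 1 else (1 - lam) * lam / ((1 + μ - lam) * (μ + lam)))
    (Pm Pp : A)
    (hPm : Pm = ((1 - ρ : ℝ) : ℂ) • E - ((Real.sqrt (ρ * (1 - ρ)) : ℝ) : ℂ) • (V + star V)
        + ((ρ : ℝ) : ℂ) • F)
    (hPp : Pp = ((1 - ν : ℝ) : ℂ) • E + ((Real.sqrt (ν * (1 - ν)) : ℝ) : ℂ) • (V + star V)
        + ((ν : ℝ) : ℂ) • F) :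
    IsProjection Pm ∧ IsProjection Pp ∧ MvNEquiv E Pm ∧ MvNEquiv E Pp ∧
      ((1 + μ : ℝ) : ℂ) • E + ((1 - lam : ℝ) : ℂ) • F
        = Pm + ((1 + μ - lam : ℝ) : ℂ) • Pp := by
  obtain ⟨hρ0, hρ1⟩ := rho_mem_Icc hμ hlam0 hlam1 hρ
  obtain ⟨hν0, hν1⟩ := nu_mem_Icc hμ hlam0 hlam1 hν
  have hPm' : Pm = ((1 - ρ : ℝ) : ℂ) • E
      + ((Real.sqrt (ρ * (1 - ρ)) : ℝ) : ℂ) • (-V + star (-V)) + ((ρ : ℝ) : ℂ) • F := by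
    rw [hPm, star_neg, ← neg_add, smul_neg, sub_eq_add_neg]
  obtain ⟨hPm_proj, hPm_equiv⟩ := hPm' ▸ isProjection_and_mvNEquiv_rotation hE hF horth
    (by rwa [star_neg, neg_mul_neg]) (by rwa [star_neg, neg_mul_neg]) hρ0 hρ1
  obtain ⟨hPp_proj, hPp_equiv⟩ := hPp ▸ isProjection_and_mvNEquiv_rotation hE hF horth
    hV1 hV2 hν0 hν1
  refine ⟨hPm_proj, hPp_proj, hPm_equiv, hPp_equiv, ?_⟩
  have hF_coeff := congrArg Complex.ofReal (rho_add_mul_nu hμ hlam0 hlam1 hρ hν)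
  have hV_coeff := congrArg Complex.ofReal (mul_sqrt_nu_mul_one_sub hμ hlam0 hlam1 hρ hν)
  push_cast at hF_coeff hV_coeff
  rw [hPm, hPp]
  push_cast
  linear_combination (norm := module) hF_coeff • E - hV_coeff • (V + star V) - hF_coeff • F
end
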